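/- For integers u, c ∈ {1,…,N} with u ≠ c, define the penalty P_u(s) = Σ_{a : |a−u|=1, 1≤a≤N} ReLU(⟨p_a − p_u, s⟩) where p_v = (v,v²). Then P_u(r_c) ≥ 1 for r_c = (2c,−1), while P_c(r_c) = 0. Moreover, if u maximizes a ↦ ⟨p_a, s⟩ over {1,…,N}, then P_u(s) = 0. -/

import Mathlib

open scoped RealInnerProductSpace

noncomputable section

abbrev E2 := EuclideanSpace ℝ (Fin 2)

def momentPt (v : ℤ) : E2 := (WithLp.equiv 2 (Fin 2 → ℝ)).symm ![(v : ℝ), (v : ℝ) ^ 2]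

def exposeDir (c : ℤ) : E2 := (WithLp.equiv 2 (Fin 2 → ℝ)).symm ![2 * (c : ℝ), -1]

/-- The local ReLU penalty `P_u(s) = Σ_{a : |a−u|=1, 1≤a≤N} ReLU(⟪p_a − p_u, s⟫)`. -/
def penalty (N : ℤ) (u : ℤ) (s : E2) : ℝ :=
  ∑ a ∈ (Finset.Icc 1 N).filter (fun a => |a - u| = 1),
    max ⟪momentPt a - momentPt u, s⟫ 0

/-! The direction `r_c` exposes `p_c`: `⟪p_a, r_c⟫ = c² - (a - c)²`, so `p_a` scores strictly
better the closer `a` is to `c`, and on integers "strictly better" means "better by at least 1". -/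

lemma inner_momentPt_exposeDir (a c : ℤ) :
    ⟪momentPt a, exposeDir c⟫ = (c : ℝ) ^ 2 - ((a : ℝ) - c) ^ 2 := by
  simp only [momentPt, exposeDir, WithLp.equiv_symm_apply, PiLp.inner_apply, RCLike.inner_apply,
    Real.ringHom_apply, Fin.sum_univ_two, Matrix.cons_val_zero, Matrix.cons_val_one,
    Matrix.cons_val_fin_one]
  ring

lemma inner_momentPt_exposeDir_le (a c : ℤ) :
    ⟪momentPt a, exposeDir c⟫ ≤ ⟪momentPt c, exposeDir c⟫ := by
  simp only [inner_momentPt_exposeDir, sub_self]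
  nlinarith [sq_nonneg ((a : ℝ) - c)]

lemma one_le_inner_sub_exposeDir_of_abs_lt {a u c : ℤ} (h : |a - c| < |u - c|) :
    1 ≤ ⟪momentPt a - momentPt u, exposeDir c⟫ := by
  have hsq : (a - c) ^ 2 + 1 ≤ (u - c) ^ 2 := sq_lt_sq.mpr h
  have hsqR : ((a : ℝ) - c) ^ 2 + 1 ≤ ((u : ℝ) - c) ^ 2 := by exact_mod_cast hsq
  rw [inner_sub_left, inner_momentPt_exposeDir, inner_momentPt_exposeDir]
  linarith

lemma exists_neighbor_closer {N u c : ℤ} (hu : u ∈ Finset.Icc 1 N) (hc : c ∈ Finset.Icc 1 N)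
    (hne : u ≠ c) :
    ∃ a ∈ (Finset.Icc 1 N).filter (fun a => |a - u| = 1), |a - c| < |u - c| := by
  simp only [Finset.mem_Icc] at hu hc
  simp only [Finset.mem_filter, Finset.mem_Icc, abs_eq (zero_le_one' ℤ)]
  rcases hne.lt_or_gt with h | h
  · exact ⟨u + 1, by omega, by rw [abs_lt, abs_of_neg (by omega)]; omega⟩
  · exact ⟨u - 1, by omega, by rw [abs_lt, abs_of_pos (by omega)]; omega⟩

lemma le_penalty_of_mem {N u a : ℤ} (s : E2)
    (ha : a ∈ (Finset.Icc 1 N).filter (fun a => |a - u| = 1)) :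
    ⟪momentPt a - momentPt u, s⟫ ≤ penalty N u s :=
  (le_max_left _ _).trans <|
    Finset.single_le_sum (f := fun a => max ⟪momentPt a - momentPt u, s⟫ 0)
      (fun _ _ => le_max_right _ _) ha

lemma penalty_eq_zero_of_forall_inner_le {N u : ℤ} {s : E2}
    (hmax : ∀ a ∈ Finset.Icc 1 N, ⟪momentPt a, s⟫ ≤ ⟪momentPt u, s⟫) :
    penalty N u s = 0 := by
  refine Finset.sum_eq_zero fun a ha => max_eq_right ?_
  rw [inner_sub_left, sub_nonpos]
  exact hmax a (Finset.mem_filter.mp ha).1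

theorem penalty_separation_general (N : ℤ)
    (u c : ℤ) (hu : u ∈ Finset.Icc 1 N) (hc : c ∈ Finset.Icc 1 N) :
    (u ≠ c → 1 ≤ penalty N u (exposeDir c)) ∧
    penalty N c (exposeDir c) = 0 ∧
    (∀ s : E2, (∀ a ∈ Finset.Icc 1 N, ⟪momentPt a, s⟫ ≤ ⟪momentPt u, s⟫) →
      penalty N u s = 0) := by
  refine ⟨fun hne => ?_, penalty_eq_zero_of_forall_inner_le fun a _ =>
    inner_momentPt_exposeDir_le a c, fun _ => penalty_eq_zero_of_forall_inner_le⟩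
  obtain ⟨a, ha, hcloser⟩ := exists_neighbor_closer hu hc hne
  exact (one_le_inner_sub_exposeDir_of_abs_lt hcloser).trans (le_penalty_of_mem _ ha)

theorem penalty_separation (N : ℤ) (hN : 2 ≤ N)
    (u c : ℤ) (hu : u ∈ Finset.Icc 1 N) (hc : c ∈ Finset.Icc 1 N) :
    (u ≠ c → 1 ≤ penalty N u (exposeDir c)) ∧
    penalty N c (exposeDir c) = 0 ∧
    (∀ s : E2, (∀ a ∈ Finset.Icc 1 N, ⟪momentPt a, s⟫ ≤ ⟪momentPt u, s⟫) →
      penalty N u s = 0) :=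
  penalty_separation_general N u c hu hc
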